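/- arXiv:1808.09328 — 7 statements merged into one kernel-verified Lean document; each statement's English description precedes it below -/
import Mathlib

section
/- Let q, r, s be nonzero elements of a field and suppose integers n < j satisfy q^{n(n-1)/2}(-r)^n s = -1 and either (j-n even and (q^{n+j-1}r^2)^{(j-n)/2} has geometric sum ∑_{i=0}^{(j-n)/2-1}(q^{n+j-1}r^2)^i = 0) or (j-n odd and ∑_{i=0}^{j-n-1}(-q^{(n+j-1)/2}r)^i = 0). Then q^{j(j-1)/2}(-r)^j s = -1. -/
/-!
Passing from `n` to `j` multiplies `q ^ (n(n-1)/2) (-r) ^ n s` by `q ^ ((j-n)(n+j-1)/2) (-r) ^ (j-n)`.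
Depending on the parity of `j - n`, this factor is a power of `q ^ (n+j-1) r ^ 2` or of
`-q ^ ((n+j-1)/2) r` whose exponent is the length of the vanishing geometric sum, so it equals `1`.
-/

variable {K : Type*} [Field K]

/-- The q-number `(k)_x = ∑_{i=0}^{k-1} x^i`. -/
def qNum (x : K) (k : ℕ) : K := ∑ i ∈ Finset.range k, x ^ i

/-- The q-factorial `(m)_q! = ∏_{k=1}^m (k)_q`. -/
def qFac (q : K) (m : ℕ) : K := ∏ k ∈ Finset.range m, qNum q (k + 1)

/-- `b_m = ∏_{i=0}^{m-1} (1 - q^i r)`. -/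
def bProd (q r : K) (m : ℕ) : K := ∏ i ∈ Finset.range m, (1 - q ^ i * r)

/-- The recursively defined set 𝕁 = 𝕁^p_{q,r,s}. -/
def memJ (q r s : K) : ℕ → Prop
  | j => q ^ (j * (j - 1) / 2) * (-r) ^ j * s = -1 ∧
      ∀ n, n < j → memJ q r s n →
        if (j - n) % 2 = 0
        then qNum (q ^ (n + j - 1) * r ^ 2) ((j - n) / 2) = 0
        else qNum (-(q ^ ((n + j - 1) / 2) * r)) (j - n) = 0
  termination_by j => j

/-- The subset 𝕁₁ ⊆ 𝕁 (condition (1) of Lemma le:J). -/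
def memJ1 (q r s : K) (j : ℕ) : Prop :=
  memJ q r s j ∧ ∀ k, k < j → memJ q r s k → q ^ (k + j - 1) * r ^ 2 ≠ 1

/-- The subset 𝕁₂ ⊆ 𝕁 (condition (2) of Lemma le:J). -/
def memJ2 (q r s : K) (n : ℕ) : Prop :=
  memJ q r s n ∧ ∃ j, j < n ∧ memJ q r s j ∧ q ^ (n + j - 1) * r ^ 2 = 1

theorem pow_eq_one_of_qNum_eq_zero {x : K} {k : ℕ} (h : qNum x k = 0) : x ^ k = 1 := by
  have := geom_sum_mul x k
  rwa [← qNum, h, zero_mul, eq_comm, sub_eq_zero] at this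

theorem Nat.mul_sub_one_div_two_eq_add {n j : ℕ} (hnj : n ≤ j) :
    j * (j - 1) / 2 = n * (n - 1) / 2 + (j - n) * (n + j - 1) / 2 := by
  rw [← Nat.add_div_of_dvd_right (Nat.even_mul_pred_self n).two_dvd]
  congr 1
  obtain ⟨d, rfl⟩ := Nat.exists_eq_add_of_le hnj
  rcases n with _ | m
  · simp
  · rw [show m + 1 + d - 1 = m + d by omega, show m + 1 + (m + 1 + d) - 1 = 2 * m + d + 1 by omega,
      Nat.add_sub_cancel_left, Nat.add_sub_cancel]
    ring

theorem pow_mul_neg_pow_eq_one_of_qNum_eq_zero {q r : K} {d e : ℕ} (hde : Odd (d + e))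
    (h : (d % 2 = 0 ∧ qNum (q ^ e * r ^ 2) (d / 2) = 0) ∨
      (d % 2 = 1 ∧ qNum (-(q ^ (e / 2) * r)) d = 0)) :
    q ^ (d * e / 2) * (-r) ^ d = 1 := by
  rcases h with ⟨hd, hsum⟩ | ⟨hd, hsum⟩
  · obtain ⟨m, rfl⟩ : ∃ m, d = 2 * m := ⟨d / 2, by omega⟩
    rw [Nat.mul_div_cancel_left m two_pos] at hsum
    rw [mul_assoc, Nat.mul_div_cancel_left _ two_pos, pow_mul', pow_mul, neg_sq, ← mul_pow,
      pow_eq_one_of_qNum_eq_zero hsum]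
  · obtain ⟨f, rfl⟩ : ∃ f, e = 2 * f := ⟨e / 2, by grind⟩
    rw [Nat.mul_div_cancel_left f two_pos] at hsum
    rw [mul_left_comm, Nat.mul_div_cancel_left _ two_pos, pow_mul', ← mul_pow, mul_neg,
      pow_eq_one_of_qNum_eq_zero hsum]

theorem stmt_2_general (q r s : K) (n j : ℕ) (hnj : n < j)
    (hn : q ^ (n * (n - 1) / 2) * (-r) ^ n * s = -1)
    (h : ((j - n) % 2 = 0 ∧ qNum (q ^ (n + j - 1) * r ^ 2) ((j - n) / 2) = 0) ∨
         ((j - n) % 2 = 1 ∧ qNum (-(q ^ ((n + j - 1) / 2) * r)) (j - n) = 0)) :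
    q ^ (j * (j - 1) / 2) * (-r) ^ j * s = -1 := by
  have hstep := pow_mul_neg_pow_eq_one_of_qNum_eq_zero
    (⟨j - 1, by omega⟩ : Odd (j - n + (n + j - 1))) h
  rw [Nat.mul_sub_one_div_two_eq_add hnj.le, pow_add, ← pow_mul_pow_sub (-r) hnj.le]
  linear_combination q ^ (n * (n - 1) / 2) * (-r) ^ n * s * hstep + hn

theorem stmt_2 (q r s : K) (hq : q ≠ 0) (hr : r ≠ 0) (hs : s ≠ 0) (n j : ℕ) (hnj : n < j)
    (hn : q ^ (n * (n - 1) / 2) * (-r) ^ n * s = -1)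
    (h : ((j - n) % 2 = 0 ∧ qNum (q ^ (n + j - 1) * r ^ 2) ((j - n) / 2) = 0) ∨
         ((j - n) % 2 = 1 ∧ qNum (-(q ^ ((n + j - 1) / 2) * r)) (j - n) = 0)) :
    q ^ (j * (j - 1) / 2) * (-r) ^ j * s = -1 :=
  stmt_2_general q r s n j hnj hn h
end

section
/- Let 𝕂 be a field with q, r, s ∈ 𝕂ˣ, and let 𝕁 ⊆ ℕ₀ be the set defined recursively by: j ∈ 𝕁 iff q^{j(j-1)/2}(-r)^j s = -1 and for every n ∈ 𝕁 with n < j, the quantity ((j-n)/2)_{q^{n+j-1}r^2} = 0 if j-n is even, or (j-n)_{-q^{(n+j-1)/2}r} = 0 if j-n is odd. Then for every j ∈ 𝕁, neither j+1 nor j+2 belongs to 𝕁. -/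
variable {K : Type*} [Field K]

theorem stmt_3 (q r s : K) (hq : q ≠ 0) (hr : r ≠ 0) (hs : s ≠ 0) (j : ℕ)
    (hj : memJ q r s j) :
    ¬ memJ q r s (j + 1) ∧ ¬ memJ q r s (j + 2) := by
  constructor
  · intro h
    rw [memJ] at h
    have := h.2 j (by omega) hj
    simp only [show j + 1 - j = 1 from by omega] at this
    norm_num [qNum] at this
  · intro h
    rw [memJ] at h
    have := h.2 j (by omega) hj
    simp only [show j + 2 - j = 2 from by omega] at this
    norm_num [qNum, Finset.sum_range_one] at this
end

section
/- With 𝕁 defined as in the recursive definition (j ∈ 𝕁 iff q^{j(j-1)/2}(-r)^j s = -1 and for all smaller n ∈ 𝕁 the corresponding q-number vanishes), for every m ∈ ℕ₀ one has |𝕁 ∩ [0, m]| ≤ m/3 + 1. -/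
variable {K : Type*} [Field K]

lemma qNum_one' (x : K) : qNum x 1 = 1 := by simp [qNum]

lemma memJ_gap (q r s : K) {n j : ℕ} (hn : memJ q r s n) (hj : memJ q r s j)
    (hlt : n < j) : n + 3 ≤ j := by
  rw [memJ] at hj
  have h2 := hj.2 n hlt hn
  by_contra h
  push_neg at h
  rcases (show j = n + 1 ∨ j = n + 2 by omega) with rfl | rfl
  · simp [show n + 1 - n = 1 from by omega, qNum_one'] at h2
  · simp [show n + 2 - n = 2 from by omega, qNum_one'] at h2

theorem stmt_4 (q r s : K) (hq : q ≠ 0) (hr : r ≠ 0) (hs : s ≠ 0) (m : ℕ) :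
    {j : ℕ | j ≤ m ∧ memJ q r s j}.ncard ≤ m / 3 + 1 := by
  set S := {j : ℕ | j ≤ m ∧ memJ q r s j} with hSdef
  have hinj : Set.InjOn (· / 3) S := by
    intro a ha b hb hab
    simp only at hab
    by_contra hne
    rcases Nat.lt_or_ge a b with h | h
    · have := memJ_gap q r s ha.2 hb.2 h; omega
    · have h' : b < a := by omega
      have := memJ_gap q r s hb.2 ha.2 h'; omega
  have himg : (· / 3) '' S ⊆ Set.Iic (m / 3) := by
    rintro _ ⟨a, ha, rfl⟩
    exact Nat.div_le_div_right ha.1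
  calc S.ncard = ((· / 3) '' S).ncard := (Set.ncard_image_of_injOn hinj).symm
    _ ≤ (Set.Iic (m / 3)).ncard := Set.ncard_le_ncard himg (Set.finite_Iic _)
    _ = m / 3 + 1 := by
        rw [← Finset.coe_Iic, Set.ncard_coe_finset, Nat.card_Iic]
end

section
/- Let 𝕂 be a field of characteristic ≠ 2, q, r ∈ 𝕂ˣ, m, n ∈ ℕ₀ with (m)_q! · ∏_{i=0}^{m-1}(1-q^i r) ≠ 0. If there exist j₁ < j₂ ≤ m with q^{n+j_t-1}r² = 1 for t = 1, 2, then q = 1 and r = -1. -/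
variable {K : Type*} [Field K]

/-!
The two relations give `q ^ (j₂ - j₁) = 1` with `0 < j₂ - j₁ ≤ m`. Since
`(d)_q (q - 1) = q ^ d - 1` and `(d)_q` is a factor of `(m)_q! ≠ 0`, this forces `q = 1`.
Then `r ^ 2 = 1`, and `r = 1` is excluded because `1 - r` is the first factor of `b_m ≠ 0`.
-/

theorem zpow_sub_eq_one_of_zpow_mul_eq_one {G₀ : Type*} [GroupWithZero G₀] {q c : G₀}
    (hq : q ≠ 0) {a b : ℤ} (ha : q ^ a * c = 1) (hb : q ^ b * c = 1) : q ^ (b - a) = 1 := by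
  rw [zpow_sub₀ hq, div_eq_mul_inv, ← eq_inv_of_mul_eq_one_right ha, hb]

theorem eq_one_of_pow_eq_one_of_qNum_ne_zero {x : K} {k : ℕ} (hx : x ^ k = 1)
    (hk : qNum x k ≠ 0) : x = 1 := by
  have h : qNum x k * (x - 1) = 0 := by rw [qNum, geom_sum_mul, hx, sub_self]
  exact sub_eq_zero.mp ((mul_eq_zero.mp h).resolve_left hk)

theorem qNum_ne_zero_of_qFac_ne_zero {q : K} {m k : ℕ} (h : qFac q m ≠ 0) (hk : 0 < k)
    (hkm : k ≤ m) : qNum q k ≠ 0 := by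
  obtain ⟨i, rfl⟩ : ∃ i, k = i + 1 := ⟨k - 1, by omega⟩
  exact Finset.prod_ne_zero_iff.mp h i (Finset.mem_range.mpr hkm)

theorem ne_one_of_bProd_ne_zero {q r : K} {m : ℕ} (h : bProd q r m ≠ 0) (hm : 0 < m) :
    r ≠ 1 := fun hr =>
  h (Finset.prod_eq_zero (Finset.mem_range.mpr hm) (by rw [hr, pow_zero, one_mul, sub_self]))

theorem stmt_8_general (q r : K) (hq : q ≠ 0) (m n : ℕ)
    (hm : qFac q m * bProd q r m ≠ 0) (j₁ j₂ : ℕ) (h12 : j₁ < j₂) (h2m : j₂ ≤ m)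
    (h1 : q ^ ((n : ℤ) + (j₁ : ℤ) - 1) * r ^ 2 = 1)
    (h2 : q ^ ((n : ℤ) + (j₂ : ℤ) - 1) * r ^ 2 = 1) :
    q = 1 ∧ r = -1 := by
  have hpow : q ^ (j₂ - j₁) = 1 := by
    have h := zpow_sub_eq_one_of_zpow_mul_eq_one hq h1 h2
    rwa [show (n : ℤ) + j₂ - 1 - (n + j₁ - 1) = ((j₂ - j₁ : ℕ) : ℤ) by omega, zpow_natCast] at h
  have hq1 : q = 1 := eq_one_of_pow_eq_one_of_qNum_ne_zero hpow
    (qNum_ne_zero_of_qFac_ne_zero (left_ne_zero_of_mul hm) (by omega) (by omega))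
  subst hq1
  have hr2 : r ^ 2 = 1 := by rwa [one_zpow, one_mul] at h1
  exact ⟨rfl, (sq_eq_one_iff.mp hr2).resolve_left
    (ne_one_of_bProd_ne_zero (right_ne_zero_of_mul hm) (by omega))⟩

theorem stmt_8 (hK : (2 : K) ≠ 0) (q r : K) (hq : q ≠ 0) (hr : r ≠ 0) (m n : ℕ)
    (hm : qFac q m * bProd q r m ≠ 0) (j₁ j₂ : ℕ) (h12 : j₁ < j₂) (h2m : j₂ ≤ m)
    (h1 : q ^ ((n : ℤ) + (j₁ : ℤ) - 1) * r ^ 2 = 1)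
    (h2 : q ^ ((n : ℤ) + (j₂ : ℤ) - 1) * r ^ 2 = 1) :
    q = 1 ∧ r = -1 :=
  stmt_8_general q r hq m n hm j₁ j₂ h12 h2m h1 h2
end

section
/- Let 𝕂 be a field, q ∈ 𝕂ˣ, and k ∈ ℕ. Given μ₀, …, μ_{k-1} ∈ 𝕂 with ∑_{i=0}^{k-1} q^{-i(i+1)/2} μ_i = 0, there exists a unique tuple (λ₀, …, λ_k) ∈ 𝕂^{k+1} with λ₀ = λ_k = 0 and μ_i = λ_{i+1} - q^i λ_i for all 0 ≤ i ≤ k-1; moreover λ_i = ∑_{j=0}^{i-1} q^{(i+j)(i-j-1)/2} μ_j for all 0 ≤ i ≤ k. -/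
variable {K : Type*} [Field K]

/-! Dividing `λ_i` by `q^(i choose 2)` turns the recurrence `λ_{i+1} = q^i λ_i + μ_i` into the
telescoping one `ν_{i+1} = ν_i + q^{-((i+1) choose 2)} μ_i`, so from `λ₀ = 0` the whole tuple is
forced, and `λ_k = q^(k choose 2) ∑_{j<k} q^{-((j+1) choose 2)} μ_j` vanishes exactly under the
hypothesis. The exponent `(i+j)(i-j-1)/2` of the closed form is `(i choose 2) - ((j+1) choose 2)`. -/

open Finset

theorem Nat.choose_two_mul_two (n : ℕ) : n.choose 2 * 2 = n * (n - 1) := by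
  cases n with
  | zero => rfl
  | succ n => rw [← Nat.add_one_mul_choose_eq, Nat.choose_one_right, Nat.add_sub_cancel]

theorem exponent_eq_choose_two_sub {i j : ℕ} (hj : j < i) :
    (i + j) * (i - j - 1) / 2 = i.choose 2 - (j + 1).choose 2 := by
  obtain ⟨t, rfl⟩ := Nat.exists_eq_add_of_lt hj
  refine Nat.div_eq_of_eq_mul_left two_pos ?_
  have hi := Nat.choose_two_mul_two (j + t + 1)
  have hj := Nat.choose_two_mul_two (j + 1)
  have hsplit : (j + t + 1) * (j + t) = (j + t + 1 + j) * t + (j + 1) * j := by ring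
  simp only [Nat.add_sub_cancel, show j + t + 1 - j - 1 = t by omega] at hi hj ⊢
  rw [Nat.sub_mul]
  omega

theorem exponent_succ {i j : ℕ} (hj : j < i) :
    (i + 1 + j) * (i + 1 - j - 1) / 2 = i + (i + j) * (i - j - 1) / 2 := by
  have hle : (j + 1).choose 2 ≤ i.choose 2 := Nat.choose_le_choose 2 hj
  have hsucc : (i + 1).choose 2 = i + i.choose 2 := by
    rw [Nat.choose_succ_succ', Nat.choose_one_right]
  rw [exponent_eq_choose_two_sub hj, exponent_eq_choose_two_sub (by omega : j < i + 1), hsucc]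
  omega

def qSol (q : K) (μ : ℕ → K) (i : ℕ) : K :=
  ∑ j ∈ range i, q ^ ((i + j) * (i - j - 1) / 2) * μ j

@[simp]
theorem qSol_zero (q : K) (μ : ℕ → K) : qSol q μ 0 = 0 := by
  simp [qSol]

theorem qSol_succ (q : K) (μ : ℕ → K) (i : ℕ) :
    qSol q μ (i + 1) = q ^ i * qSol q μ i + μ i := by
  rw [qSol, qSol, sum_range_succ, mul_sum, show i + 1 - i - 1 = 0 by omega, Nat.mul_zero,
    Nat.zero_div, pow_zero, one_mul]
  congr 1
  refine sum_congr rfl fun j hj => ?_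
  rw [exponent_succ (mem_range.mp hj), pow_add, mul_assoc]

theorem qSol_eq_pow_mul_sum {q : K} (hq : q ≠ 0) (μ : ℕ → K) (i : ℕ) :
    qSol q μ i = q ^ i.choose 2 * ∑ j ∈ range i, (q ^ (j + 1).choose 2)⁻¹ * μ j := by
  rw [qSol, mul_sum]
  refine sum_congr rfl fun j hj => ?_
  have hj : j < i := mem_range.mp hj
  rw [exponent_eq_choose_two_sub hj, pow_sub₀ q hq (Nat.choose_le_choose 2 hj), mul_assoc]

theorem eq_qSol_of_rec {q : K} {μ : ℕ → K} {k : ℕ} {l : Fin (k + 1) → K}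
    (h0 : l ⟨0, k.succ_pos⟩ = 0)
    (hrec : ∀ i (hi : i < k),
      μ i = l ⟨i + 1, Nat.succ_lt_succ hi⟩ - q ^ i * l ⟨i, Nat.lt_succ_of_lt hi⟩) :
    ∀ i (hi : i ≤ k), l ⟨i, Nat.lt_succ_of_le hi⟩ = qSol q μ i := by
  intro i
  induction i with
  | zero => simpa using h0
  | succ i ih =>
    intro hi
    rw [qSol_succ, ← ih (by omega), hrec i (by omega)]
    ring

theorem stmt_11 (q : K) (hq : q ≠ 0) (k : ℕ) (μ : ℕ → K)
    (hμ : ∑ i ∈ Finset.range k, (q ^ (i * (i + 1) / 2))⁻¹ * μ i = 0) :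
    (∃! l : Fin (k + 1) → K,
      l ⟨0, by omega⟩ = 0 ∧ l ⟨k, by omega⟩ = 0 ∧
        ∀ i : ℕ, (hi : i < k) →
          μ i = l ⟨i + 1, by omega⟩ - q ^ i * l ⟨i, by omega⟩) ∧
    ∀ l : Fin (k + 1) → K,
      (l ⟨0, by omega⟩ = 0 ∧ l ⟨k, by omega⟩ = 0 ∧
        ∀ i : ℕ, (hi : i < k) →
          μ i = l ⟨i + 1, by omega⟩ - q ^ i * l ⟨i, by omega⟩) →
      ∀ i : ℕ, (hi : i ≤ k) →
        l ⟨i, by omega⟩ = ∑ j ∈ Finset.range i, q ^ ((i + j) * (i - j - 1) / 2) * μ j := by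
  have hsol_k : qSol q μ k = 0 := by
    have htri (i : ℕ) : i * (i + 1) / 2 = (i + 1).choose 2 := by
      rw [Nat.choose_two_right, Nat.add_sub_cancel, mul_comm]
    simp_rw [htri] at hμ
    rw [qSol_eq_pow_mul_sum hq, hμ, mul_zero]
  refine ⟨⟨fun i => qSol q μ i, ⟨qSol_zero q μ, hsol_k, fun i _ => ?_⟩, fun l hl => ?_⟩,
    fun l hl => eq_qSol_of_rec hl.1 hl.2.2⟩
  · simp only [qSol_succ]
    ring
  · funext i
    exact eq_qSol_of_rec hl.1 hl.2.2 i i.is_le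
end

section
/- Let 𝕂 be a field of characteristic 3 with elements q, r, s ∈ 𝕂ˣ satisfying s = -1 and r = -q^{-1}. Then for the recursively defined set 𝕁 one has 𝕁 ∩ [0,3] = {0, 3}; in particular 0 ∈ 𝕁, 1 ∉ 𝕁, 2 ∉ 𝕁, and 3 ∈ 𝕁. -/
variable {K : Type*} [Field K]

theorem stmt_14 [CharP K 3] (q r s : K) (hq : q ≠ 0) (hs : s = -1) (hr : r = -q⁻¹) :
    memJ q r s 0 ∧ ¬ memJ q r s 1 ∧ ¬ memJ q r s 2 ∧ memJ q r s 3 := by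
  have h3 : (3 : K) = 0 := by exact_mod_cast CharP.cast_eq_zero K 3
  have h0 : memJ q r s 0 := by
    rw [memJ]
    exact ⟨by simp [hs], fun n hn => absurd hn (by omega)⟩
  have h1 : ¬ memJ q r s 1 := by
    rw [memJ]
    rintro ⟨-, h⟩
    have := h 0 (by norm_num) h0
    simp [qNum] at this
  have h2 : ¬ memJ q r s 2 := by
    rw [memJ]
    rintro ⟨-, h⟩
    have := h 0 (by norm_num) h0
    simp [qNum] at this
  refine ⟨h0, h1, h2, ?_⟩
  rw [memJ]
  constructor
  · rw [hs, hr]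
    field_simp
  · intro n hn hmem
    interval_cases n
    · rw [if_neg (by norm_num)]
      have he : -(q ^ ((0 + 3 - 1) / 2) * r) = 1 := by
        rw [hr]; field_simp; norm_num
      rw [he]
      simp only [qNum, Finset.sum_range_succ, Finset.sum_range_zero, one_pow]
      linear_combination h3
    · exact absurd hmem h1
    · exact absurd hmem h2
end

section
/- Let 𝕂 be a field of characteristic p ≥ 0, q, r, s ∈ 𝕂ˣ, and m ∈ ℕ₀ with (m)_q! · ∏_{i=0}^{m-1}(1-q^i r) ≠ 0. Define m' = (m+1)/2 if m is odd; m' = m/2 if m is even and q^{m²/4} r^{m/2} s ≠ -1; and m' = m/2 + 1 if m is even and q^{m²/4} r^{m/2} s = -1. Then |𝕁 ∩ [0, m]| ≤ m', where 𝕁 is the recursively defined set attached to (q, r, s). -/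
/-!
Two elements `n < j` of 𝕁 differ by at least 3: for `j - n ∈ {1, 2}` the defining condition
of 𝕁 asks the q-number `(1)_x = 1` to vanish. So at most `m / 3 + 1` elements of 𝕁 lie in
`[0, m]`, which is within the claimed bound except for `m = 0`, where `0 ∈ 𝕁 ↔ s = -1`.
-/

variable {K : Type*} [Field K]

lemma memJ_zero_iff (q r s : K) : memJ q r s 0 ↔ s = -1 := by
  rw [memJ]
  simp

lemma memJ.add_three_le {q r s : K} {n j : ℕ} (hn : memJ q r s n) (hj : memJ q r s j)
    (hnj : n < j) : n + 3 ≤ j := by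
  by_contra! hlt
  rw [memJ] at hj
  have hvanish := hj.2 n hnj hn
  obtain hd | hd : j - n = 1 ∨ j - n = 2 := by omega
  all_goals simp [hd, qNum] at hvanish

lemma Set.ncard_le_div_add_one_of_add_le {S : Set ℕ} {d m : ℕ} (hd : 0 < d)
    (hS : ∀ a ∈ S, ∀ b ∈ S, a < b → a + d ≤ b) (hSm : ∀ a ∈ S, a ≤ m) :
    S.ncard ≤ m / d + 1 := by
  have hmono : StrictMonoOn (· / d) S := fun a ha b hb hab =>
    calc a / d < a / d + 1 := Nat.lt_succ_self _
      _ = (a + d) / d := (Nat.add_div_right a hd).symm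
      _ ≤ b / d := Nat.div_le_div_right (hS a ha b hb hab)
  have hmaps : Set.MapsTo (· / d) S (Set.Iic (m / d)) := fun a ha =>
    Nat.div_le_div_right (hSm a ha)
  calc S.ncard ≤ (Set.Iic (m / d)).ncard :=
        Set.ncard_le_ncard_of_injOn _ hmaps hmono.injOn (Set.finite_Iic _)
    _ = m / d + 1 := by rw [← Finset.coe_Iic, Set.ncard_coe_finset, Nat.card_Iic]

theorem stmt_17_general (q r s : K) (m : ℕ) :
    (Odd m → {j : ℕ | j ≤ m ∧ memJ q r s j}.ncard ≤ (m + 1) / 2) ∧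
    (Even m → q ^ (m ^ 2 / 4) * r ^ (m / 2) * s ≠ -1 →
      {j : ℕ | j ≤ m ∧ memJ q r s j}.ncard ≤ m / 2) ∧
    (Even m → q ^ (m ^ 2 / 4) * r ^ (m / 2) * s = -1 →
      {j : ℕ | j ≤ m ∧ memJ q r s j}.ncard ≤ m / 2 + 1) := by
  set S : Set ℕ := {j : ℕ | j ≤ m ∧ memJ q r s j}
  have hcard : S.ncard ≤ m / 3 + 1 :=
    Set.ncard_le_div_add_one_of_add_le three_pos
      (fun a ha b hb hab => ha.2.add_three_le hb.2 hab) (fun a ha => ha.1)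
  refine ⟨fun ⟨k, hk⟩ => by omega, fun ⟨k, hk⟩ hne => ?_, fun ⟨k, hk⟩ _ => by omega⟩
  obtain rfl | hm : m = 0 ∨ 0 < m := Nat.eq_zero_or_pos m
  · have hS : S = ∅ := Set.eq_empty_of_forall_notMem fun j ⟨hj0, hjJ⟩ => by
      obtain rfl : j = 0 := Nat.le_zero.mp hj0
      exact hne (by simpa using (memJ_zero_iff q r s).mp hjJ)
    simp [hS]
  · omega

theorem stmt_17 (q r s : K) (hq : q ≠ 0) (hr : r ≠ 0) (hs : s ≠ 0) (m : ℕ)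
    (hm : qFac q m * bProd q r m ≠ 0) :
    (Odd m → {j : ℕ | j ≤ m ∧ memJ q r s j}.ncard ≤ (m + 1) / 2) ∧
    (Even m → q ^ (m ^ 2 / 4) * r ^ (m / 2) * s ≠ -1 →
      {j : ℕ | j ≤ m ∧ memJ q r s j}.ncard ≤ m / 2) ∧
    (Even m → q ^ (m ^ 2 / 4) * r ^ (m / 2) * s = -1 →
      {j : ℕ | j ≤ m ∧ memJ q r s j}.ncard ≤ m / 2 + 1) :=
  stmt_17_general q r s m
end
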